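/- arXiv:2305.05568 — 7 statements merged into one kernel-verified Lean document; each statement's English description precedes it below -/
import Mathlib

section
/- Let X be an exponentially distributed random variable with mean γ > 0, and let c > 0 be a constant. Then the expectation E[log₂(1 + cX)] equals (1/ln 2) · exp(1/(cγ)) · E1(1/(cγ)), where E1 is the exponential integral. In particular, for the SNR model SNR = |g|² ℓ r^{-α}/σ² with |g|² exponential of mean γ and noise power σ² = N₀B, the ergodic capacity E[B log₂(1 + SNR)] equals (B/ln 2) · exp(Bκ) · E1(Bκ), where κ = N₀ r^{α}/(γℓ) is a constant independent of B. -/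
open Real MeasureTheory ProbabilityTheory Set Filter Topology
open scoped NNReal ENNReal

/-- The exponential integral `E1 x = ∫_x^∞ e^{-u}/u du`. -/
noncomputable def expInt (x : ℝ) : ℝ := ∫ u in Set.Ioi x, Real.exp (-u) / u

lemma myIntDiv {a : ℝ} (ha : 0 < a) :
    IntegrableOn (fun u => Real.exp (-u) / u) (Set.Ioi a) := by
  have h1 : IntegrableOn (fun u => a⁻¹ * Real.exp (-(1:ℝ) * u)) (Set.Ioi a) :=
    (exp_neg_integrableOn_Ioi a one_pos).const_mul _
  refine Integrable.mono h1 ?_ ?_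
  · exact ((measurable_exp.comp measurable_neg).div measurable_id).aestronglyMeasurable
  · filter_upwards [ae_restrict_mem measurableSet_Ioi] with u hu
    have hu0 : 0 < u := ha.trans hu
    have he : (0:ℝ) < Real.exp (-u) := Real.exp_pos _
    rw [Real.norm_eq_abs, Real.norm_eq_abs, abs_of_nonneg (by positivity),
      abs_of_nonneg (by positivity), neg_one_mul]
    rw [div_le_iff₀ hu0]
    rw [mul_comm a⁻¹, mul_assoc]
    nlinarith [mul_le_mul_of_nonneg_left hu.le (le_of_lt (mul_pos he (inv_pos.mpr ha))),
      mul_inv_cancel₀ ha.ne']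

lemma myIntLog {a : ℝ} (ha : 0 < a) :
    IntegrableOn (fun u => Real.exp (-u) * (Real.log u - Real.log a)) (Set.Ioi a) := by
  have h2 : IntegrableOn (fun u : ℝ => Real.exp (-u) * u) (Set.Ioi a) := by
    have := Real.GammaIntegral_convergent (s := 2) (by norm_num)
    have h' : IntegrableOn (fun x : ℝ => Real.exp (-x) * x ^ ((2:ℝ) - 1)) (Set.Ioi 0) := this
    have h'' : IntegrableOn (fun x : ℝ => Real.exp (-x) * x) (Set.Ioi 0) := by
      refine h'.congr_fun (fun x hx => ?_) measurableSet_Ioi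
      norm_num [Real.rpow_one]
    exact h''.mono_set (Set.Ioi_subset_Ioi ha.le)
  have h3 : IntegrableOn
      (fun u : ℝ => Real.exp (-u) * u + |Real.log a| * Real.exp (-(1:ℝ) * u)) (Set.Ioi a) :=
    h2.add ((exp_neg_integrableOn_Ioi a one_pos).const_mul _)
  refine Integrable.mono h3 ?_ ?_
  · exact ((measurable_exp.comp measurable_neg).mul
      (Real.measurable_log.sub measurable_const)).aestronglyMeasurable
  · filter_upwards [ae_restrict_mem measurableSet_Ioi] with u hu
    have hu0 : 0 < u := ha.trans hu
    have he : (0:ℝ) < Real.exp (-u) := Real.exp_pos _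
    have hlog : Real.log a ≤ Real.log u := Real.log_le_log ha hu.le
    have hlu : Real.log u ≤ u := (Real.log_le_sub_one_of_pos hu0).trans (by linarith)
    have hla : -Real.log a ≤ |Real.log a| := neg_le_abs _
    rw [Real.norm_eq_abs, Real.norm_eq_abs, abs_of_nonneg (by nlinarith),
      abs_of_nonneg (by positivity), neg_one_mul]
    nlinarith [abs_nonneg (Real.log a)]

lemma myKey {a : ℝ} (ha : 0 < a) :
    ∫ u in Set.Ioi a, Real.exp (-u) * (Real.log u - Real.log a) = expInt a := by
  have hder : ∀ u ∈ Set.Ici a,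
      HasDerivAt (fun v => -(Real.exp (-v) * (Real.log v - Real.log a)))
        (Real.exp (-u) * (Real.log u - Real.log a) - Real.exp (-u) / u) u := by
    intro u hu
    have hu0 : 0 < u := lt_of_lt_of_le ha hu
    have h1 : HasDerivAt (fun v : ℝ => Real.exp (-v)) (-Real.exp (-u)) u := by
      simpa using ((hasDerivAt_id u).neg.exp)
    have h2 : HasDerivAt (fun v => Real.log v - Real.log a) u⁻¹ u :=
      (Real.hasDerivAt_log hu0.ne').sub_const _
    have h3 := (h1.mul h2).neg
    refine HasDerivAt.congr_deriv h3 ?_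
    ring
  have hint : IntegrableOn
      (fun u => Real.exp (-u) * (Real.log u - Real.log a) - Real.exp (-u) / u) (Set.Ioi a) :=
    (myIntLog ha).sub (myIntDiv ha)
  have htend : Tendsto (fun u => -(Real.exp (-u) * (Real.log u - Real.log a))) atTop (𝓝 0) := by
    rw [← neg_zero]
    refine Tendsto.neg ?_
    have hg : Tendsto (fun u : ℝ => u * Real.exp (-u) + |Real.log a| * Real.exp (-u))
        atTop (𝓝 0) := by
      have h1 : Tendsto (fun u : ℝ => u ^ 1 * Real.exp (-u)) atTop (𝓝 0) :=
        tendsto_pow_mul_exp_neg_atTop_nhds_zero 1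
      simp only [pow_one] at h1
      simpa using h1.add (Real.tendsto_exp_neg_atTop_nhds_zero.const_mul |Real.log a|)
    refine squeeze_zero' ?_ ?_ hg
    · filter_upwards [eventually_gt_atTop a] with u hu
      have hlog : Real.log a ≤ Real.log u := Real.log_le_log ha hu.le
      exact mul_nonneg (Real.exp_pos _).le (by linarith)
    · filter_upwards [eventually_gt_atTop a] with u hu
      have hu0 : 0 < u := ha.trans hu
      have he : (0:ℝ) < Real.exp (-u) := Real.exp_pos _
      have hlu : Real.log u ≤ u := (Real.log_le_sub_one_of_pos hu0).trans (by linarith)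
      have hla : -Real.log a ≤ |Real.log a| := neg_le_abs _
      nlinarith
  have h0 := integral_Ioi_of_hasDerivAt_of_tendsto' hder hint htend
  rw [integral_sub (myIntLog ha) (myIntDiv ha)] at h0
  simp only [sub_self, mul_zero, neg_zero, sub_zero, zero_sub, neg_neg] at h0
  have : expInt a = ∫ u in Set.Ioi a, Real.exp (-u) / u := rfl
  linarith [h0]

lemma mySub {lam c : ℝ} (hlam : 0 < lam) (hc : 0 < c) :
    ∫ x in Set.Ioi (0:ℝ), lam * Real.exp (-(lam * x)) * Real.log (1 + c * x)
      = Real.exp (lam / c) * expInt (lam / c) := by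
  set a := lam / c with ha_def
  have ha : 0 < a := div_pos hlam hc
  have e0 : ∫ x in Set.Ioi (0:ℝ), lam * Real.exp (-(lam * x)) * Real.log (1 + c * x)
      = lam * ∫ x in Set.Ioi (0:ℝ), Real.exp (-(lam * x)) * Real.log (1 + c * x) := by
    simp_rw [mul_assoc]
    exact integral_const_mul _ _
  have e1 : ∫ x in Set.Ioi (0:ℝ), Real.exp (-(lam * x)) * Real.log (1 + c * x)
      = lam⁻¹ * ∫ u in Set.Ioi (0:ℝ), Real.exp (-u) * Real.log (1 + (c / lam) * u) := by
    have h := integral_comp_mul_left_Ioi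
      (fun u => Real.exp (-u) * Real.log (1 + (c / lam) * u)) 0 hlam
    rw [mul_zero] at h
    rw [smul_eq_mul] at h
    rw [← h]
    refine setIntegral_congr_fun measurableSet_Ioi (fun x _ => ?_)
    have : c / lam * (lam * x) = c * x := by field_simp
    simp only [this]
  have e2 : ∫ u in Set.Ioi (0:ℝ), Real.exp (-u) * Real.log (1 + (c / lam) * u)
      = ∫ u in Set.Ioi (0:ℝ), Real.exp (-u) * (Real.log (u + a) - Real.log a) := by
    refine setIntegral_congr_fun measurableSet_Ioi (fun u hu => ?_)
    have hu0 : 0 < u := hu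
    have h1 : 1 + c / lam * u = (u + a) / a := by
      rw [ha_def]; field_simp; ring
    rw [h1, Real.log_div (by positivity) ha.ne']
  have hemb : MeasurableEmbedding (fun x : ℝ => x + a) :=
    (MeasurableEquiv.addRight a).measurableEmbedding
  have hmp : MeasurePreserving (fun x : ℝ => x + a) volume volume :=
    measurePreserving_add_right volume a
  have hpre : (fun x : ℝ => x + a) ⁻¹' Set.Ioi a = Set.Ioi 0 := by
    ext x; simp
  have e3 : ∫ u in Set.Ioi (0:ℝ), Real.exp (-u) * (Real.log (u + a) - Real.log a)
      = ∫ v in Set.Ioi a, Real.exp a * (Real.exp (-v) * (Real.log v - Real.log a)) := by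
    rw [← hmp.setIntegral_preimage_emb hemb
      (fun v => Real.exp a * (Real.exp (-v) * (Real.log v - Real.log a))) (Set.Ioi a), hpre]
    refine setIntegral_congr_fun measurableSet_Ioi (fun u _ => ?_)
    have : Real.exp a * Real.exp (-(u + a)) = Real.exp (-u) := by
      rw [← Real.exp_add]; ring_nf
    simp only [← mul_assoc, this]
  have e4 : ∫ v in Set.Ioi a, Real.exp a * (Real.exp (-v) * (Real.log v - Real.log a))
      = Real.exp a * expInt a := by
    rw [integral_const_mul, myKey ha]
  rw [e0, e1, e2, e3, e4]
  field_simp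

/-- If `X` is exponentially distributed with mean `γ > 0` (i.e. rate `1/γ`) and `c > 0`, then
`E[log₂(1 + c X)] = (1/ln 2) · exp(1/(cγ)) · E1(1/(cγ))`.  In particular, for the SNR model
`SNR = |g|² ℓ r^{-α} / (N₀ B)` with `|g|²` exponential of mean `γ`, the ergodic capacity
`E[B log₂(1 + SNR)]` equals `(B/ln 2) · exp(Bκ) · E1(Bκ)` with `κ = N₀ r^α/(γ ℓ)`. -/
theorem ergodic_capacity_exponential_fading
    {Ω : Type*} [MeasurableSpace Ω] (μ : Measure Ω) [IsProbabilityMeasure μ]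
    (X : Ω → ℝ) (γ : ℝ) (hγ : 0 < γ) (hX : Measure.map X μ = expMeasure (1 / γ))
    (c : ℝ) (hc : 0 < c) :
    (∫ ω, Real.logb 2 (1 + c * X ω) ∂μ =
      (1 / Real.log 2) * Real.exp (1 / (c * γ)) * expInt (1 / (c * γ))) ∧
    ∀ B ℓ r α N₀ : ℝ, 0 < B → 0 < ℓ → 0 < r → 0 < N₀ →
      c = ℓ * r ^ (-α) / (N₀ * B) →
      ∫ ω, B * Real.logb 2 (1 + c * X ω) ∂μ =
        (B / Real.log 2) * Real.exp (B * (N₀ * r ^ α / (γ * ℓ))) *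
          expInt (B * (N₀ * r ^ α / (γ * ℓ))) := by

  have hγ' : 0 < 1 / γ := by positivity
  have hXm : AEMeasurable X μ := by
    by_contra h
    rw [Measure.map_of_not_aemeasurable h] at hX
    have hp : IsProbabilityMeasure (expMeasure (1 / γ)) := isProbabilityMeasure_expMeasure hγ'
    have h1 := hp.measure_univ
    rw [← hX] at h1
    simp at h1
  have hfm : Measurable (fun x : ℝ => Real.log (1 + c * x)) :=
    Real.measurable_log.comp (measurable_const.add (measurable_id.const_mul c))
  have hmain : ∫ ω, Real.log (1 + c * X ω) ∂μ
      = Real.exp (1 / (c * γ)) * expInt (1 / (c * γ)) := by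
    have h1 : ∫ ω, Real.log (1 + c * X ω) ∂μ
        = ∫ x, Real.log (1 + c * x) ∂(expMeasure (1 / γ)) := by
      rw [← hX, integral_map hXm hfm.aestronglyMeasurable]
    rw [h1]
    have hd : expMeasure (1 / γ) = volume.withDensity
        (fun x => ((Real.toNNReal (exponentialPDFReal (1 / γ) x) : ℝ≥0) : ℝ≥0∞)) := rfl
    rw [hd, integral_withDensity_eq_integral_smul
      ((measurable_exponentialPDFReal _).real_toNNReal)]
    have h2 : ∀ x : ℝ,
        (Real.toNNReal (exponentialPDFReal (1 / γ) x) : ℝ≥0) • Real.log (1 + c * x)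
        = exponentialPDFReal (1 / γ) x * Real.log (1 + c * x) := fun x => by
      rw [NNReal.smul_def, Real.coe_toNNReal _ (exponentialPDFReal_nonneg hγ' x), smul_eq_mul]
    simp_rw [h2]
    have hpdf : ∀ x : ℝ, exponentialPDFReal (1 / γ) x
        = if 0 ≤ x then (1 / γ) * Real.exp (-((1 / γ) * x)) else 0 := fun x => by
      rw [exponentialPDFReal, gammaPDFReal]
      simp [Real.rpow_one, Real.Gamma_one]
    have h3 : ∫ x, exponentialPDFReal (1 / γ) x * Real.log (1 + c * x)
        = ∫ x in Set.Ioi 0, exponentialPDFReal (1 / γ) x * Real.log (1 + c * x) := by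
      symm
      refine setIntegral_eq_integral_of_forall_compl_eq_zero (fun x hx => ?_)
      simp only [Set.mem_Ioi, not_lt] at hx
      rcases lt_or_eq_of_le hx with h | h
      · rw [hpdf x, if_neg (not_le.mpr h), zero_mul]
      · subst h; norm_num
    rw [h3]
    have h4 : ∫ x in Set.Ioi (0:ℝ), exponentialPDFReal (1 / γ) x * Real.log (1 + c * x)
        = ∫ x in Set.Ioi (0:ℝ), (1 / γ) * Real.exp (-((1 / γ) * x)) * Real.log (1 + c * x) := by
      refine setIntegral_congr_fun measurableSet_Ioi (fun x hx => ?_)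
      rw [hpdf x, if_pos (le_of_lt hx)]
    rw [h4, mySub hγ' hc]
    have harg : 1 / γ / c = 1 / (c * γ) := by
      rw [div_div, mul_comm γ c]
    rw [harg]
  have hfirst : ∫ ω, Real.logb 2 (1 + c * X ω) ∂μ =
      (1 / Real.log 2) * Real.exp (1 / (c * γ)) * expInt (1 / (c * γ)) := by
    simp_rw [Real.logb]
    rw [integral_div, hmain]
    ring
  refine ⟨hfirst, fun B ℓ r α N₀ hB hℓ hr hN hce => ?_⟩
  have hrα : (0:ℝ) < r ^ α := Real.rpow_pos_of_pos hr α
  have harg : B * (N₀ * r ^ α / (γ * ℓ)) = 1 / (c * γ) := by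
    rw [hce, Real.rpow_neg hr.le]
    field_simp
  rw [integral_const_mul, hfirst, harg]
  ring
end

section
/- Fix κ > 0. The function φ(B) = B · e^{Bκ} · E1(Bκ) is strictly increasing on (0, ∞). -/
open Real

open MeasureTheory in
lemma shift_Ioi (x : ℝ) (g : ℝ → ℝ) :
    ∫ u in Set.Ioi x, g u = ∫ t in Set.Ioi (0:ℝ), g (t + x) := by
  rw [← integral_indicator measurableSet_Ioi, ← integral_indicator measurableSet_Ioi,
    ← integral_add_right_eq_self (Set.indicator (Set.Ioi x) g) x]
  congr 1; ext t
  by_cases h : 0 < t <;>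
    simp [Set.indicator_apply, Set.mem_Ioi, h, lt_add_iff_pos_left]

open MeasureTheory in
lemma phi_repr {κ B : ℝ} :
    B * Real.exp (B * κ) * expInt (B * κ)
      = ∫ t in Set.Ioi (0:ℝ), B * Real.exp (-t) / (t + B * κ) := by
  rw [expInt, shift_Ioi (B * κ) (fun u => Real.exp (-u) / u), ← integral_const_mul]
  apply setIntegral_congr_fun measurableSet_Ioi
  intro t ht
  have hkey : Real.exp (B * κ) * Real.exp (-(t + B * κ)) = Real.exp (-t) := by
    rw [← Real.exp_add]; ring_nf
  simp only
  calc B * Real.exp (B * κ) * (Real.exp (-(t + B * κ)) / (t + B * κ))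
      = B * (Real.exp (B * κ) * Real.exp (-(t + B * κ))) / (t + B * κ) := by ring
    _ = B * Real.exp (-t) / (t + B * κ) := by rw [hkey]

open MeasureTheory in
lemma integrable_f {κ B : ℝ} (hκ : 0 < κ) (hB : 0 < B) :
    IntegrableOn (fun t => B * Real.exp (-t) / (t + B * κ)) (Set.Ioi 0) := by
  have hmeas : AEStronglyMeasurable (fun t => B * Real.exp (-t) / (t + B * κ))
      (volume.restrict (Set.Ioi (0:ℝ))) := by
    apply ContinuousOn.aestronglyMeasurable _ measurableSet_Ioi
    apply ContinuousOn.div (by fun_prop) (by fun_prop)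
    intro t ht
    have : (0:ℝ) < t := ht
    positivity
  have hint : IntegrableOn (fun t : ℝ => κ⁻¹ * Real.exp (-(1:ℝ) * t)) (Set.Ioi 0) :=
    ((exp_neg_integrableOn_Ioi 0 one_pos).const_mul _)
  refine Integrable.mono hint hmeas ?_
  filter_upwards [ae_restrict_mem measurableSet_Ioi] with t ht
  have ht0 : (0:ℝ) < t := ht
  have hd : 0 < t + B * κ := by positivity
  rw [Real.norm_eq_abs, Real.norm_eq_abs, abs_of_nonneg (by positivity),
    abs_of_nonneg (by positivity)]
  rw [div_le_iff₀ hd]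
  have : B ≤ κ⁻¹ * (t + B * κ) := by
    rw [mul_add]
    have : κ⁻¹ * (B * κ) = B := by field_simp
    nlinarith [mul_pos (inv_pos.mpr hκ) ht0]
  calc B * Real.exp (-t) ≤ κ⁻¹ * (t + B * κ) * Real.exp (-t) := by
        exact mul_le_mul_of_nonneg_right this (Real.exp_nonneg _)
    _ = κ⁻¹ * Real.exp (-1 * t) * (t + B * κ) := by ring_nf

open MeasureTheory in
/-- For fixed `κ > 0`, the (scaled) ergodic capacity `φ(B) = B e^{Bκ} E1(Bκ)` is strictly
increasing on `(0, ∞)`. -/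
theorem strictMonoOn_ergodic_capacity (κ : ℝ) (hκ : 0 < κ) :
    StrictMonoOn (fun B : ℝ => B * Real.exp (B * κ) * expInt (B * κ)) (Set.Ioi 0) := by
  intro a ha b hb hab
  have ha0 : (0:ℝ) < a := ha
  have hb0 : (0:ℝ) < b := hb
  simp only
  rw [phi_repr, phi_repr]
  have hia := integrable_f hκ ha0 (κ := κ)
  have hib := integrable_f hκ hb0 (κ := κ)
  rw [← sub_pos, ← integral_sub hib hia]
  set g : ℝ → ℝ := fun t => b * Real.exp (-t) / (t + b * κ) - a * Real.exp (-t) / (t + a * κ)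
    with hg
  have hpos : ∀ t ∈ Set.Ioi (0:ℝ), 0 < g t := by
    intro t ht
    have ht0 : (0:ℝ) < t := ht
    have hda : 0 < t + a * κ := by positivity
    have hdb : 0 < t + b * κ := by positivity
    have key : a * Real.exp (-t) / (t + a * κ) < b * Real.exp (-t) / (t + b * κ) := by
      rw [div_lt_div_iff₀ hda hdb]
      have he : 0 < Real.exp (-t) := Real.exp_pos _
      nlinarith [mul_pos ht0 he, mul_pos (mul_pos ht0 he) (sub_pos.mpr hab)]
    simpa [hg] using sub_pos.mpr key
  have hgnn : 0 ≤ᵐ[volume.restrict (Set.Ioi (0:ℝ))] g := by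
    filter_upwards [ae_restrict_mem measurableSet_Ioi] with t ht using (hpos t ht).le
  have hgi : IntegrableOn g (Set.Ioi 0) := hib.sub hia
  rw [setIntegral_pos_iff_support_of_nonneg_ae hgnn hgi]
  have hss : Set.Ioi (0:ℝ) ⊆ Function.support g ∩ Set.Ioi 0 := fun t ht =>
    ⟨(hpos t ht).ne', ht⟩
  calc (0:ENNReal) < volume (Set.Ioi (0:ℝ)) := by simp
    _ ≤ volume (Function.support g ∩ Set.Ioi 0) := measure_mono hss
end

section
/- Fix κ > 0. The function φ(B) = B · e^{Bκ} · E1(Bκ) is concave on (0, ∞). -/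
open Real

/-!
Substituting `u = Bκ + t` in the integral defining `E1` gives
`B e^{Bκ} E1(Bκ) = ∫₀^∞ e^{-t} · B / (Bκ + t) dt`, a mixture with nonnegative weights of the
functions `B ↦ B / (Bκ + t)`, each of which is concave on `(0, ∞)`.
-/

open MeasureTheory Set

theorem integral_comp_add_right_Ioi {E : Type*} [NormedAddCommGroup E] [NormedSpace ℝ E]
    (g : ℝ → E) (a d : ℝ) :
    ∫ x in Ioi a, g (x + d) = ∫ x in Ioi (a + d), g x := by
  rw [← integral_indicator measurableSet_Ioi, ← integral_indicator measurableSet_Ioi,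
    ← integral_add_right_eq_self ((Ioi (a + d)).indicator g) d]
  congr 1 with x
  simp only [indicator_apply, mem_Ioi, add_lt_add_iff_right]

theorem concaveOn_div_mul_add {κ t : ℝ} (hκ : 0 < κ) (ht : 0 ≤ t) :
    ConcaveOn ℝ (Ioi 0) fun B : ℝ => B / (B * κ + t) := by
  refine ⟨convex_Ioi 0, fun x hx y hy a b ha hb hab => ?_⟩
  have hz : 0 < a • x + b • y := convex_Ioi 0 hx hy ha hb hab
  rw [mem_Ioi] at hx hy
  simp only [smul_eq_mul] at hz ⊢
  obtain rfl : b = 1 - a := by linarith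
  -- with `z = a x + (1 - a) y`, the concavity gap is
  -- `a (1 - a) κ t (x - y)² / ((xκ + t)(yκ + t)(zκ + t))`
  rw [mul_div_assoc', mul_div_assoc', div_add_div _ _ (by positivity) (by positivity),
    div_le_div_iff₀ (by positivity) (by positivity)]
  nlinarith [mul_nonneg (mul_nonneg (mul_nonneg (mul_nonneg ha hb) hκ.le) ht) (sq_nonneg (x - y))]

theorem integrableOn_exp_neg_mul_div_mul_add {κ B : ℝ} (hκ : 0 < κ) (hB : 0 < B) :
    IntegrableOn (fun t => exp (-t) * (B / (B * κ + t))) (Ioi 0) := by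
  refine (integrableOn_exp_neg_Ioi 0).mul_bdd (c := κ⁻¹)
    (by fun_prop : Measurable _).aestronglyMeasurable ?_
  filter_upwards [ae_restrict_mem measurableSet_Ioi] with t (ht : 0 < t)
  rw [norm_of_nonneg (by positivity)]
  calc B / (B * κ + t) ≤ B / (B * κ) := by gcongr; linarith
    _ = κ⁻¹ := by field_simp

theorem mul_exp_mul_expInt_eq_integral {κ B : ℝ} (hκ : 0 < κ) (hB : 0 < B) :
    B * exp (B * κ) * expInt (B * κ) = ∫ t in Ioi 0, exp (-t) * (B / (B * κ + t)) := by
  rw [expInt, ← zero_add (B * κ), ← integral_comp_add_right_Ioi, ← integral_const_mul]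
  simp only [zero_add]
  refine setIntegral_congr_fun measurableSet_Ioi fun t (ht : 0 < t) => ?_
  rw [neg_add, exp_add, exp_neg (B * κ), add_comm t]
  field_simp

/-- For fixed `κ > 0`, the (scaled) ergodic capacity `φ(B) = B e^{Bκ} E1(Bκ)` is concave
on `(0, ∞)`. -/
theorem concaveOn_ergodic_capacity (κ : ℝ) (hκ : 0 < κ) :
    ConcaveOn ℝ (Set.Ioi 0) (fun B : ℝ => B * Real.exp (B * κ) * expInt (B * κ)) := by
  refine (integral_concaveOn_of_integrand_ae (convex_Ioi 0) ?_
    fun B hB => integrableOn_exp_neg_mul_div_mul_add hκ hB).congr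
    fun B hB => (mul_exp_mul_expInt_eq_integral hκ hB).symm
  filter_upwards [ae_restrict_mem measurableSet_Ioi] with t (ht : 0 < t)
  simpa only [smul_eq_mul] using (concaveOn_div_mul_add hκ ht.le).smul (exp_pos (-t)).le
end

section
/- Fix κ > 0 and κ₁ > 0. The function (B, s) ↦ κ₁ s² / (B · e^{Bκ} · E1(Bκ)) is jointly convex on (0, ∞) × (0, ∞). -/
open Real MeasureTheory Set

lemma integrableOn_rep (κ B : ℝ) (hκ : 0 < κ) (hB : 0 < B) :
    IntegrableOn (fun t => Real.exp (-t) * (B / (B * κ + t))) (Set.Ioi 0) := by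
  have hexp : IntegrableOn (fun t : ℝ => Real.exp (-t)) (Set.Ioi (0:ℝ)) := by
    simpa using exp_neg_integrableOn_Ioi (0:ℝ) (one_pos)
  refine Integrable.mono' (hexp.const_mul (1/κ)) ?_ ?_
  · refine (ContinuousOn.mul (by fun_prop) ?_).aestronglyMeasurable measurableSet_Ioi
    refine ContinuousOn.div continuousOn_const (by fun_prop) ?_
    intro t ht
    have ht0 : (0:ℝ) < t := ht
    positivity
  · filter_upwards [ae_restrict_mem measurableSet_Ioi] with t ht
    have ht0 : (0:ℝ) < t := ht
    have hden : (0:ℝ) < B * κ + t := by positivity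
    rw [Real.norm_eq_abs, abs_of_nonneg (by positivity)]
    have h1 : B / (B * κ + t) ≤ 1/κ := by
      rw [div_le_div_iff₀ hden (by positivity)]
      nlinarith
    have := Real.exp_pos (-t)
    calc Real.exp (-t) * (B / (B*κ+t)) ≤ Real.exp (-t) * (1/κ) := by nlinarith
      _ = 1/κ * Real.exp (-t) := by ring

lemma rep (κ B : ℝ) (hκ : 0 < κ) (hB : 0 < B) :
    B * Real.exp (B * κ) * expInt (B * κ) =
      ∫ t in Set.Ioi (0:ℝ), Real.exp (-t) * (B / (B * κ + t)) := by
  have htr : expInt (B * κ) =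
      ∫ t in Set.Ioi (0:ℝ), Real.exp (-(B * κ + t)) / (B * κ + t) := by
    unfold expInt
    rw [show Set.Ioi (B*κ) = (fun t => B*κ + t) '' Set.Ioi 0 by simp]
    exact (measurePreserving_add_left volume (B*κ)).setIntegral_image_emb
      (measurableEmbedding_addLeft (B*κ)) _ _
  rw [htr, ← integral_const_mul]
  refine setIntegral_congr_fun measurableSet_Ioi (fun t ht => ?_)
  have ht0 : (0:ℝ) < t := ht
  have hden : (0:ℝ) < B * κ + t := by positivity
  have h1 : Real.exp (-(B*κ+t)) = Real.exp (-t) / Real.exp (B*κ) := by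
    rw [← Real.exp_sub]; ring_nf
  rw [h1]
  have h2 : Real.exp (B*κ) ≠ 0 := by positivity
  field_simp

lemma phi_pos (κ B : ℝ) (hκ : 0 < κ) (hB : 0 < B) :
    0 < B * Real.exp (B * κ) * expInt (B * κ) := by
  rw [rep κ B hκ hB]
  refine (setIntegral_pos_iff_support_of_nonneg_ae ?_ ?_).2 ?_
  · filter_upwards [ae_restrict_mem measurableSet_Ioi] with t ht
    have ht0 : (0:ℝ) < t := ht
    positivity
  · exact integrableOn_rep κ B hκ hB
  · have hsub : Set.Ioi (0:ℝ) ⊆ Function.support fun t => Real.exp (-t) * (B / (B * κ + t)) := by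
      intro t ht
      have ht0 : (0:ℝ) < t := ht
      have : 0 < Real.exp (-t) * (B / (B * κ + t)) := by positivity
      exact ne_of_gt this
    have heq : (Function.support fun t => Real.exp (-t) * (B / (B * κ + t))) ∩ Set.Ioi 0
        = Set.Ioi (0:ℝ) := Set.inter_eq_right.mpr hsub
    rw [heq, Real.volume_Ioi]
    simp

lemma comb_pos {a b x y : ℝ} (ha : 0 ≤ a) (hb : 0 ≤ b) (hab : a + b = 1)
    (hx : 0 < x) (hy : 0 < y) : 0 < a * x + b * y := by
  rcases ha.eq_or_lt with h | h
  · have hb1 : b = 1 := by linarith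
    rw [← h, hb1]; simpa using hy
  · have h1 : 0 < a * x := mul_pos h hx
    nlinarith [mul_nonneg hb hy.le]

lemma phi_concave (κ B₁ B₂ a b : ℝ) (hκ : 0 < κ) (h1 : 0 < B₁) (h2 : 0 < B₂)
    (ha : 0 ≤ a) (hb : 0 ≤ b) (hab : a + b = 1) :
    a * (B₁ * Real.exp (B₁ * κ) * expInt (B₁ * κ)) +
      b * (B₂ * Real.exp (B₂ * κ) * expInt (B₂ * κ)) ≤
    (a * B₁ + b * B₂) * Real.exp ((a * B₁ + b * B₂) * κ) * expInt ((a * B₁ + b * B₂) * κ) := by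
  have hB : 0 < a * B₁ + b * B₂ := comb_pos ha hb hab h1 h2
  rw [rep κ B₁ hκ h1, rep κ B₂ hκ h2, rep κ _ hκ hB,
    ← integral_const_mul a, ← integral_const_mul b,
    ← integral_add ((integrableOn_rep κ B₁ hκ h1).const_mul a)
      ((integrableOn_rep κ B₂ hκ h2).const_mul b)]
  apply setIntegral_mono_on
  · exact ((integrableOn_rep κ B₁ hκ h1).const_mul a).add
      ((integrableOn_rep κ B₂ hκ h2).const_mul b)
  · exact integrableOn_rep κ _ hκ hB
  · exact measurableSet_Ioi
  · intro t ht
    have ht0 : (0:ℝ) < t := ht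
    have hd1 : (0:ℝ) < B₁ * κ + t := by positivity
    have hd2 : (0:ℝ) < B₂ * κ + t := by positivity
    have hd : (0:ℝ) < (a * B₁ + b * B₂) * κ + t := by positivity
    have hfrac : a * (B₁ / (B₁ * κ + t)) + b * (B₂ / (B₂ * κ + t)) ≤
        (a * B₁ + b * B₂) / ((a * B₁ + b * B₂) * κ + t) := by
      rw [mul_div_assoc' a, mul_div_assoc' b, div_add_div _ _ hd1.ne' hd2.ne',
        div_le_div_iff₀ (by positivity) hd]
      have hb' : b = 1 - a := by linarith
      have key : (a * B₁ + b * B₂) * ((B₁ * κ + t) * (B₂ * κ + t)) -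
          (a * B₁ * (B₂ * κ + t) + b * B₂ * (B₁ * κ + t)) * ((a * B₁ + b * B₂) * κ + t)
          = a * b * κ * t * (B₁ - B₂) ^ 2 := by subst hb'; ring
      nlinarith [mul_nonneg (mul_nonneg (mul_nonneg (mul_nonneg ha hb) hκ.le) ht0.le)
        (sq_nonneg (B₁ - B₂))]
    have hexp := Real.exp_pos (-t)
    calc a * (Real.exp (-t) * (B₁ / (B₁ * κ + t))) + b * (Real.exp (-t) * (B₂ / (B₂ * κ + t)))
        = Real.exp (-t) * (a * (B₁ / (B₁ * κ + t)) + b * (B₂ / (B₂ * κ + t))) := by ring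
      _ ≤ Real.exp (-t) * ((a * B₁ + b * B₂) / ((a * B₁ + b * B₂) * κ + t)) := by
          exact mul_le_mul_of_nonneg_left hfrac hexp.le

lemma sq_div_convex (s₁ s₂ t₁ t₂ a b : ℝ) (h1 : 0 < t₁) (h2 : 0 < t₂)
    (ha : 0 ≤ a) (hb : 0 ≤ b) :
    (a * s₁ + b * s₂) ^ 2 / (a * t₁ + b * t₂) ≤ a * (s₁ ^ 2 / t₁) + b * (s₂ ^ 2 / t₂) := by
  rcases eq_or_lt_of_le (by positivity : (0:ℝ) ≤ a * t₁ + b * t₂) with h | h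
  · have ha0 : a = 0 := by nlinarith
    have hb0 : b = 0 := by nlinarith
    simp [ha0, hb0]
  · rw [mul_div_assoc' a, mul_div_assoc' b, div_add_div _ _ h1.ne' h2.ne',
      div_le_div_iff₀ h (by positivity)]
    have key : (a * s₁ ^ 2 * t₂ + b * s₂ ^ 2 * t₁) * (a * t₁ + b * t₂) -
        (a * s₁ + b * s₂) ^ 2 * (t₁ * t₂) = a * b * (s₁ * t₂ - s₂ * t₁) ^ 2 := by ring
    nlinarith [mul_nonneg (mul_nonneg ha hb) (sq_nonneg (s₁ * t₂ - s₂ * t₁))]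

/-- For fixed `κ > 0` and `κ₁ > 0`, the uplink transmission time
`(B, s) ↦ κ₁ s² / (B e^{Bκ} E1(Bκ))` is jointly convex on `(0, ∞) × (0, ∞)`. -/
theorem convexOn_uplink_time (κ κ₁ : ℝ) (hκ : 0 < κ) (hκ₁ : 0 < κ₁) :
    ConvexOn ℝ (Set.Ioi 0 ×ˢ Set.Ioi 0)
      (fun p : ℝ × ℝ =>
        κ₁ * p.2 ^ 2 / (p.1 * Real.exp (p.1 * κ) * expInt (p.1 * κ))) := by
  refine ⟨(convex_Ioi 0).prod (convex_Ioi 0), ?_⟩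
  rintro ⟨B₁, s₁⟩ ⟨hB₁, hs₁⟩ ⟨B₂, s₂⟩ ⟨hB₂, hs₂⟩ a b ha hb hab
  simp only [Prod.smul_mk, Prod.mk_add_mk, smul_eq_mul] at *
  replace hB₁ : (0:ℝ) < B₁ := hB₁
  replace hB₂ : (0:ℝ) < B₂ := hB₂
  set φ₁ := B₁ * Real.exp (B₁ * κ) * expInt (B₁ * κ) with hφ₁def
  set φ₂ := B₂ * Real.exp (B₂ * κ) * expInt (B₂ * κ) with hφ₂def
  have hφ₁ : 0 < φ₁ := phi_pos κ B₁ hκ hB₁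
  have hφ₂ : 0 < φ₂ := phi_pos κ B₂ hκ hB₂
  have hB : 0 < a * B₁ + b * B₂ := comb_pos ha hb hab hB₁ hB₂
  have hφ : 0 < (a * B₁ + b * B₂) * Real.exp ((a * B₁ + b * B₂) * κ) *
      expInt ((a * B₁ + b * B₂) * κ) := phi_pos κ _ hκ hB
  have hmix : 0 < a * φ₁ + b * φ₂ := comb_pos ha hb hab hφ₁ hφ₂
  have hconc := phi_concave κ B₁ B₂ a b hκ hB₁ hB₂ ha hb hab
  calc κ₁ * (a * s₁ + b * s₂) ^ 2 /
        ((a * B₁ + b * B₂) * Real.exp ((a * B₁ + b * B₂) * κ) * expInt ((a * B₁ + b * B₂) * κ))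
      ≤ κ₁ * (a * s₁ + b * s₂) ^ 2 / (a * φ₁ + b * φ₂) := by
        apply div_le_div_of_nonneg_left (by positivity) hmix
        exact hconc
    _ = κ₁ * ((a * s₁ + b * s₂) ^ 2 / (a * φ₁ + b * φ₂)) := by ring
    _ ≤ κ₁ * (a * (s₁ ^ 2 / φ₁) + b * (s₂ ^ 2 / φ₂)) := by
        exact mul_le_mul_of_nonneg_left (sq_div_convex s₁ s₂ φ₁ φ₂ a b hφ₁ hφ₂ ha hb) hκ₁.le
    _ = a * (κ₁ * s₁ ^ 2 / φ₁) + b * (κ₁ * s₂ ^ 2 / φ₂) := by ring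
end

section
/- Fix ρ ∈ (0, 1) and T_s > 0. Define for T ≥ 0 the function F̄(T) = 1 - (1 - ρ) · Σ_{ν=0}^{⌊T/T_s⌋} ([ρ(ν - t)]^ν / ν!) · e^{-ρ(ν - t)}, where t = T/T_s. Then F̄ is continuous and monotonically decreasing on [0, ∞). -/
open Real

/-- The complementary CDF `P(T_w > T)` of the stationary waiting time in an M/D/1 queue
with load `ρ` and deterministic service time `Ts`, from Erlang's principle of statistical
equilibrium:
`F̄(T) = 1 - (1-ρ) Σ_{ν=0}^{⌊T/Ts⌋} [ρ(ν-t)]^ν/ν! · e^{-ρ(ν-t)}`, with `t = T/Ts`. -/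
noncomputable def md1Tail (ρ Ts T : ℝ) : ℝ :=
  1 - (1 - ρ) * ∑ ν ∈ Finset.range (⌊T / Ts⌋₊ + 1),
    (ρ * ((ν : ℝ) - T / Ts)) ^ ν / (Nat.factorial ν) * Real.exp (-ρ * ((ν : ℝ) - T / Ts))

open Set Filter

/-! With `t = T / Ts` and the Poisson weights `p ν u = u ^ ν e^{-u} / ν!`, the tail is
`1 - (1 - ρ) S t` where `S t = Q ⌊t⌋ t` and `Q n t = ∑_{ν ≤ n} p ν (ρ (ν - t))`. The term that
enters at `t = n + 1` vanishes there, so the smooth pieces `Q n` glue to a continuous `S`.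
Since `p (ν + 1)' = p ν - p (ν + 1)`, the pieces satisfy the delay equation
`Q (n + 1)' t = ρ (Q (n + 1) t - Q n (t - 1))`, i.e. `S' t = ρ (S t - S (t - 1))`. If `S` is
monotone on `[0, n]`, then `S (t - 1) ≤ S n` on `[n, n + 1]`, and the integrating factor `e^{-ρt}`
gives `S t ≥ S n ≥ S (t - 1)` there, hence `S' ≥ 0`: induction on `n`. -/

theorem monotoneOn_Icc_of_hasDerivAt_eq_mul_sub {f h : ℝ → ℝ} {ρ a b : ℝ} (hρ : 0 ≤ ρ)
    (hf : ∀ t ∈ Icc a b, HasDerivAt f (ρ * (f t - h t)) t)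
    (hh : ∀ t ∈ Icc a b, h t ≤ f a) : MonotoneOn f (Icc a b) := by
  have hint : ∀ t ∈ interior (Icc a b), t ∈ Icc a b := fun t ht => interior_subset ht
  have hψ : ∀ t ∈ Icc a b, HasDerivAt (fun s => exp (-ρ * s) * (f s - f a))
      (exp (-ρ * t) * ρ * (f a - h t)) t := fun t ht =>
    ((((hasDerivAt_id t).const_mul (-ρ)).exp).mul ((hf t ht).sub_const (f a))).congr_deriv
      (by simp only [id]; ring)
  -- integrating factor: `e^{-ρt} (f t - f a)` is nondecreasing, so `h ≤ f a ≤ f` and `f' ≥ 0`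
  have hge : ∀ t ∈ Icc a b, f a ≤ f t := by
    have hψ_mono : MonotoneOn (fun s => exp (-ρ * s) * (f s - f a)) (Icc a b) :=
      monotoneOn_of_hasDerivWithinAt_nonneg (convex_Icc a b)
        (fun t ht => (hψ t ht).continuousAt.continuousWithinAt)
        (fun t ht => (hψ t (hint t ht)).hasDerivWithinAt) fun t ht =>
          mul_nonneg (mul_nonneg (exp_pos _).le hρ) (sub_nonneg.2 (hh t (hint t ht)))
    intro t ht
    have := hψ_mono (left_mem_Icc.2 (ht.1.trans ht.2)) ht ht.1
    simp only [sub_self, mul_zero] at this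
    exact sub_nonneg.1 ((mul_nonneg_iff_of_pos_left (exp_pos _)).1 this)
  exact monotoneOn_of_hasDerivWithinAt_nonneg (convex_Icc a b)
    (fun t ht => (hf t ht).continuousAt.continuousWithinAt)
    (fun t ht => (hf t (hint t ht)).hasDerivWithinAt) fun t ht =>
      mul_nonneg hρ (sub_nonneg.2 ((hh t (hint t ht)).trans (hge t (hint t ht))))

noncomputable def poissonTerm (ν : ℕ) (u : ℝ) : ℝ :=
  u ^ ν / ν.factorial * exp (-u)

theorem hasDerivAt_poissonTerm_zero (u : ℝ) :
    HasDerivAt (poissonTerm 0) (-poissonTerm 0 u) u := by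
  convert (hasDerivAt_neg u).exp using 1
  · ext; simp [poissonTerm]
  · simp [poissonTerm]

theorem hasDerivAt_poissonTerm_succ (ν : ℕ) (u : ℝ) :
    HasDerivAt (poissonTerm (ν + 1)) (poissonTerm ν u - poissonTerm (ν + 1) u) u := by
  have h := ((hasDerivAt_pow (ν + 1) u).div_const ((ν + 1).factorial : ℝ)).mul
    (hasDerivAt_neg u).exp
  refine h.congr_deriv ?_
  simp only [poissonTerm, Nat.factorial_succ, Nat.cast_mul, Nat.add_sub_cancel]
  field_simp
  push_cast
  ring

noncomputable def md1Term (ρ : ℝ) (ν : ℕ) (t : ℝ) : ℝ :=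
  poissonTerm ν (ρ * (ν - t))

theorem md1Term_zero (ρ t : ℝ) : md1Term ρ 0 t = exp (ρ * t) := by
  simp [md1Term, poissonTerm]

theorem md1Term_succ_self (ρ : ℝ) (n : ℕ) : md1Term ρ (n + 1) (n + 1) = 0 := by
  simp [md1Term, poissonTerm]

theorem hasDerivAt_md1Term_zero (ρ t : ℝ) :
    HasDerivAt (md1Term ρ 0) (ρ * md1Term ρ 0 t) t := by
  have h := (hasDerivAt_poissonTerm_zero (ρ * ((0 : ℕ) - t))).comp t
    (((hasDerivAt_id t).const_sub _).const_mul ρ)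
  refine h.congr_deriv ?_
  simp only [md1Term]
  ring

theorem hasDerivAt_md1Term_succ (ρ : ℝ) (ν : ℕ) (t : ℝ) :
    HasDerivAt (md1Term ρ (ν + 1)) (ρ * (md1Term ρ (ν + 1) t - md1Term ρ ν (t - 1))) t := by
  have h := (hasDerivAt_poissonTerm_succ ν (ρ * ((ν + 1 : ℕ) - t))).comp t
    (((hasDerivAt_id t).const_sub _).const_mul ρ)
  refine h.congr_deriv ?_
  simp only [md1Term, Nat.cast_succ]
  ring_nf

noncomputable def md1Partial (ρ : ℝ) (n : ℕ) (t : ℝ) : ℝ :=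
  ∑ ν ∈ Finset.range (n + 1), md1Term ρ ν t

theorem md1Partial_zero (ρ : ℝ) : md1Partial ρ 0 = md1Term ρ 0 :=
  funext fun _ => Finset.sum_range_one _

theorem md1Partial_succ (ρ : ℝ) (n : ℕ) :
    md1Partial ρ (n + 1) = md1Partial ρ n + md1Term ρ (n + 1) :=
  funext fun _ => Finset.sum_range_succ _ _

theorem continuous_md1Partial (ρ : ℝ) (n : ℕ) : Continuous (md1Partial ρ n) := by
  unfold md1Partial md1Term poissonTerm
  fun_prop

theorem hasDerivAt_md1Partial_succ (ρ : ℝ) (n : ℕ) (t : ℝ) :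
    HasDerivAt (md1Partial ρ (n + 1))
      (ρ * (md1Partial ρ (n + 1) t - md1Partial ρ n (t - 1))) t := by
  induction n with
  | zero =>
    rw [md1Partial_succ, md1Partial_zero]
    refine ((hasDerivAt_md1Term_zero ρ t).add (hasDerivAt_md1Term_succ ρ 0 t)).congr_deriv ?_
    simp only [Pi.add_apply]
    ring
  | succ n ih =>
    rw [md1Partial_succ ρ (n + 1)]
    refine (ih.add (hasDerivAt_md1Term_succ ρ (n + 1) t)).congr_deriv ?_
    simp only [Pi.add_apply, md1Partial_succ ρ n]
    ring

noncomputable def md1Sum (ρ t : ℝ) : ℝ :=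
  md1Partial ρ ⌊t⌋₊ t

theorem md1Tail_eq (ρ Ts T : ℝ) : md1Tail ρ Ts T = 1 - (1 - ρ) * md1Sum ρ (T / Ts) := by
  simp only [md1Tail, md1Sum, md1Partial, md1Term, poissonTerm, neg_mul]

theorem md1Sum_eq_of_mem_Icc (ρ : ℝ) (n : ℕ) {t : ℝ} (ht : t ∈ Icc (n : ℝ) (n + 1)) :
    md1Sum ρ t = md1Partial ρ n t := by
  rcases ht.2.eq_or_lt with rfl | hlt
  · rw [md1Sum, ← Nat.cast_succ, Nat.floor_natCast, md1Partial_succ, Pi.add_apply,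
      Nat.cast_succ, md1Term_succ_self, add_zero]
  · rw [md1Sum, (Nat.floor_eq_iff ((Nat.cast_nonneg n).trans ht.1)).2 ⟨ht.1, hlt⟩]

theorem md1Sum_eq_of_mem_Icc_int (ρ : ℝ) (n : ℤ) {t : ℝ} (ht : t ∈ Icc (n : ℝ) (n + 1)) :
    md1Sum ρ t = md1Partial ρ n.toNat t := by
  rcases le_or_gt 0 n with hn | hn
  · lift n to ℕ using hn
    exact md1Sum_eq_of_mem_Icc ρ n ht
  · have ht0 : t ≤ 0 := ht.2.trans (by exact_mod_cast hn)
    rw [md1Sum, Nat.floor_of_nonpos ht0, Int.toNat_of_nonpos hn.le]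

theorem continuous_md1Sum (ρ : ℝ) : Continuous (md1Sum ρ) := by
  have hfin : LocallyFinite fun n : ℤ => Icc (n : ℝ) (n + 1) :=
    locallyFinite_Icc_of_tendsto tendsto_intCast_atTop_atTop
      (tendsto_atBot_add_const_right _ 1 (tendsto_intCast_atBot_iff.2 tendsto_id))
  refine hfin.continuous (iUnion_Icc_intCast ℝ) (fun _ => isClosed_Icc) fun n => ?_
  exact (continuous_md1Partial ρ n.toNat).continuousOn.congr
    fun t ht => md1Sum_eq_of_mem_Icc_int ρ n ht

theorem monotoneOn_md1Sum_Icc {ρ : ℝ} (hρ : 0 ≤ ρ) (n : ℕ) :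
    MonotoneOn (md1Sum ρ) (Icc 0 n) := by
  induction n with
  | zero => simp
  | succ n ih =>
    have hlast : MonotoneOn (md1Sum ρ) (Icc n (n + 1)) := by
      refine MonotoneOn.congr ?_ fun t ht => (md1Sum_eq_of_mem_Icc ρ n ht).symm
      rcases n with _ | m
      · intro x _ y _ hxy
        simp only [md1Partial_zero, md1Term_zero]
        exact exp_le_exp.2 (mul_le_mul_of_nonneg_left hxy hρ)
      · refine monotoneOn_Icc_of_hasDerivAt_eq_mul_sub hρ
          (fun t _ => hasDerivAt_md1Partial_succ ρ m t) fun t ht => ?_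
        push_cast at ih ht ⊢
        have ht' : t - 1 ∈ Icc (m : ℝ) (m + 1) := ⟨by linarith [ht.1], by linarith [ht.2]⟩
        rw [← md1Sum_eq_of_mem_Icc ρ m ht', ← md1Sum_eq_of_mem_Icc ρ (m + 1) (by simp)]
        exact ih ⟨(Nat.cast_nonneg m).trans ht'.1, ht'.2⟩ ⟨by positivity, le_rfl⟩ ht'.2
    push_cast
    rw [← Icc_union_Icc_eq_Icc (Nat.cast_nonneg n) (by linarith)]
    exact ih.union_right hlast (isGreatest_Icc (Nat.cast_nonneg n)) (isLeast_Icc (by linarith))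

theorem monotoneOn_md1Sum {ρ : ℝ} (hρ : 0 ≤ ρ) : MonotoneOn (md1Sum ρ) (Ici 0) :=
  fun _ hx y hy hxy => monotoneOn_md1Sum_Icc hρ (⌊y⌋₊ + 1)
    ⟨hx, hxy.trans (by exact_mod_cast (Nat.lt_floor_add_one y).le)⟩
    ⟨hy, by exact_mod_cast (Nat.lt_floor_add_one y).le⟩ hxy

/-- For `ρ ∈ (0,1)` and `Ts > 0`, the M/D/1 waiting-time CCDF is continuous and
monotonically decreasing on `[0, ∞)`. -/
theorem md1Tail_continuous_antitone (ρ Ts : ℝ) (hρ0 : 0 < ρ) (hρ1 : ρ < 1) (hTs : 0 < Ts) :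
    ContinuousOn (md1Tail ρ Ts) (Set.Ici 0) ∧ AntitoneOn (md1Tail ρ Ts) (Set.Ici 0) := by
  have htail : md1Tail ρ Ts = fun T => 1 - (1 - ρ) * md1Sum ρ (T / Ts) :=
    funext (md1Tail_eq ρ Ts)
  rw [htail]
  refine ⟨?_, fun x hx y hy hxy => ?_⟩
  · exact (continuous_const.sub (continuous_const.mul
      ((continuous_md1Sum ρ).comp (continuous_id.div_const Ts)))).continuousOn
  · have hmono := monotoneOn_md1Sum hρ0.le (div_nonneg hx hTs.le) (div_nonneg hy hTs.le)
      (div_le_div_of_nonneg_right hxy hTs.le)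
    exact sub_le_sub_left (mul_le_mul_of_nonneg_left hmono (sub_nonneg.2 hρ1.le)) 1
end

section
/- Let κ₂ > 0 and Ω₁ ∈ (0, 1). Then there exists a unique real w < -1 satisfying w e^w = -Ω₁ e^{-Ω₁}, and the number B* = -Ω₁ / (κ₂ (Ω₁ + w)) is positive and is the unique positive solution of the equation B · ln(1 + 1/(Bκ₂)) = Ω₁/κ₂. Equivalently, B* = (-Ω₁/κ₂)/(Ω₁ + W₋₁(-Ω₁ e^{-Ω₁})), where W₋₁ denotes the branch of the Lambert W function taking values in (-∞, -1]. -/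
/-!
On `(-∞, -1]` the map `w ↦ w eʷ` decreases strictly from `0⁻` to `-e⁻¹`, and
`-e⁻¹ < -Ω₁ e^{-Ω₁} < 0` because `x e^{-x}` has its strict maximum `e⁻¹` at `x = 1`; this gives
the branch value `w = W₋₁(-Ω₁ e^{-Ω₁})`. Taking logarithms in `w eʷ = -Ω₁ e^{-Ω₁}` gives
`log (-w / Ω₁) = -(Ω₁ + w)`, and `1 + 1 / (B* κ₂) = -w / Ω₁`, so `B*` solves the equation.
It is the only positive solution because `B ↦ B log (1 + 1 / (B κ₂))` is strictly increasing:
up to the factor `κ₂⁻¹` it is the slope `log (1 + t) / t` of the concave function `log (1 + t)`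
at `t = 1 / (B κ₂)`.
-/

open Real Set Filter Topology

theorem mul_exp_neg_lt_exp_neg_one {x : ℝ} (hx : x ≠ 1) : x * exp (-x) < exp (-1) := by
  have hx_lt : x < exp (x - 1) := by
    linarith [add_one_lt_exp (sub_ne_zero.mpr hx)]
  calc x * exp (-x) < exp (x - 1) * exp (-x) := by gcongr
    _ = exp (-1) := by rw [← exp_add]; ring_nf

theorem strictAntiOn_mul_exp : StrictAntiOn (fun w : ℝ => w * exp w) (Iic (-1)) := by
  refine strictAntiOn_of_deriv_neg (convex_Iic _) (by fun_prop) fun x hx => ?_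
  rw [interior_Iic] at hx
  have hderiv : HasDerivAt (fun w : ℝ => w * exp w) (1 * exp x + x * exp x) x :=
    (hasDerivAt_id x).mul (hasDerivAt_exp x)
  rw [hderiv.deriv, ← add_mul]
  exact mul_neg_of_neg_of_pos (by linarith [hx.out]) (exp_pos x)

theorem tendsto_mul_exp_atBot : Tendsto (fun w : ℝ => w * exp w) atBot (𝓝 0) := by
  have h := ((tendsto_pow_mul_exp_neg_atTop_nhds_zero 1).comp tendsto_neg_atBot_atTop).neg
  simpa using h

theorem existsUnique_lt_neg_one_mul_exp_eq {y : ℝ} (hy₁ : -exp (-1) < y) (hy₀ : y < 0) :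
    ∃! w : ℝ, w < -1 ∧ w * exp w = y := by
  obtain ⟨a, hay, ha⟩ :=
    ((tendsto_mul_exp_atBot.eventually (eventually_gt_nhds hy₀)).and
      (eventually_lt_atBot (-1))).exists
  have hcont : ContinuousOn (fun w : ℝ => w * exp w) (Icc a (-1)) := by fun_prop
  obtain ⟨w, ⟨-, hw⟩, hwy⟩ :=
    intermediate_value_Ico' ha.le hcont ⟨by simpa using hy₁, hay.le⟩
  refine ⟨w, ⟨hw, hwy⟩, fun v ⟨hv, hvy⟩ => ?_⟩
  exact strictAntiOn_mul_exp.injOn (mem_Iic.mpr hv.le) (mem_Iic.mpr hw.le) (hvy.trans hwy.symm)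

theorem strictAntiOn_log_one_add_div_self :
    StrictAntiOn (fun t : ℝ => log (1 + t) / t) (Ioi 0) := by
  intro s (hs : 0 < s) t (ht : 0 < t) hst
  have hslope := strictConcaveOn_log_Ioi.secant_strict_mono (a := 1) (mem_Ioi.mpr one_pos)
    (show 0 < 1 + s by linarith) (show 0 < 1 + t by linarith)
    (by linarith) (by linarith) (by linarith)
  simpa only [log_one, sub_zero, add_sub_cancel_left] using hslope

theorem strictMonoOn_mul_log_one_add_one_div {κ : ℝ} (hκ : 0 < κ) :
    StrictMonoOn (fun B : ℝ => B * log (1 + 1 / (B * κ))) (Ioi 0) := by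
  have hslope : ∀ B : ℝ, 0 < B →
      B * log (1 + 1 / (B * κ)) = κ⁻¹ * (log (1 + 1 / (B * κ)) / (1 / (B * κ))) := by
    intro B hB
    field_simp
  intro B (hB : 0 < B) C (hC : 0 < C) hBC
  simp only [hslope B hB, hslope C hC]
  refine mul_lt_mul_of_pos_left ?_ (inv_pos.mpr hκ)
  exact strictAntiOn_log_one_add_div_self (by positivity : (0 : ℝ) < 1 / (C * κ))
    (by positivity : (0 : ℝ) < 1 / (B * κ)) (by gcongr)

theorem log_neg_div_eq_of_mul_exp_eq {Ω w : ℝ} (hΩ : 0 < Ω) (hw : w < 0)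
    (hwΩ : w * exp w = -Ω * exp (-Ω)) : log (-w / Ω) = -(Ω + w) := by
  have hlog := congrArg log (show -w * exp w = Ω * exp (-Ω) by linarith)
  rw [log_mul (by linarith) (exp_pos w).ne', log_mul hΩ.ne' (exp_pos _).ne', log_exp,
    log_exp] at hlog
  rw [log_div (by linarith) hΩ.ne']
  linarith

theorem mul_log_one_add_one_div_eq_of_mul_exp_eq {κ Ω w : ℝ} (hκ : κ ≠ 0) (hΩ : 0 < Ω)
    (hw : w < -Ω) (hwΩ : w * exp w = -Ω * exp (-Ω)) :
    -Ω / (κ * (Ω + w)) * log (1 + 1 / (-Ω / (κ * (Ω + w)) * κ)) = Ω / κ := by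
  have hΩw : Ω + w ≠ 0 := by linarith
  have harg : 1 + 1 / (-Ω / (κ * (Ω + w)) * κ) = -w / Ω := by
    field_simp
    ring
  rw [harg, log_neg_div_eq_of_mul_exp_eq hΩ (by linarith) hwΩ]
  field_simp

/-- Bandwidth part of Theorem 2 of the paper: for `κ₂ > 0` and `Ω₁ ∈ (0,1)` there is a
unique `w < -1` with `w e^w = -Ω₁ e^{-Ω₁}` (the value `W₋₁(-Ω₁ e^{-Ω₁})` of the lower
branch of the Lambert W function), and `B* = -Ω₁/(κ₂(Ω₁ + w))` is positive and is the
unique positive solution of `B ln(1 + 1/(Bκ₂)) = Ω₁/κ₂`. -/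
theorem min_bandwidth (κ₂ Ω₁ : ℝ) (hκ₂ : 0 < κ₂) (hΩ₁0 : 0 < Ω₁) (hΩ₁1 : Ω₁ < 1) :
    (∃! w : ℝ, w < -1 ∧ w * Real.exp w = -Ω₁ * Real.exp (-Ω₁)) ∧
    ∀ w : ℝ, w < -1 → w * Real.exp w = -Ω₁ * Real.exp (-Ω₁) →
      0 < -Ω₁ / (κ₂ * (Ω₁ + w)) ∧
      (-Ω₁ / (κ₂ * (Ω₁ + w))) *
        Real.log (1 + 1 / ((-Ω₁ / (κ₂ * (Ω₁ + w))) * κ₂)) = Ω₁ / κ₂ ∧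
      ∀ B : ℝ, 0 < B → B * Real.log (1 + 1 / (B * κ₂)) = Ω₁ / κ₂ →
        B = -Ω₁ / (κ₂ * (Ω₁ + w)) := by
  have hy₁ : -exp (-1) < -Ω₁ * exp (-Ω₁) := by
    linarith [mul_exp_neg_lt_exp_neg_one hΩ₁1.ne]
  have hy₀ : -Ω₁ * exp (-Ω₁) < 0 := mul_neg_of_neg_of_pos (by linarith) (exp_pos _)
  refine ⟨existsUnique_lt_neg_one_mul_exp_eq hy₁ hy₀, fun w hw hwΩ => ?_⟩
  have hB : 0 < -Ω₁ / (κ₂ * (Ω₁ + w)) :=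
    div_pos_of_neg_of_neg (by linarith) (mul_neg_of_pos_of_neg hκ₂ (by linarith))
  have hsol := mul_log_one_add_one_div_eq_of_mul_exp_eq hκ₂.ne' hΩ₁0 (by linarith) hwΩ
  refine ⟨hB, hsol, fun B hB' hBeq => ?_⟩
  exact (strictMonoOn_mul_log_one_add_one_div hκ₂).injOn hB' hB (hBeq.trans hsol.symm)
end

section
/- Let D, κ₁, κ₂, κ₃, κ₄, c₁, c₂ be positive reals, set Ω₁ = κ₂ κ₁ κ₄²/D and Ω₂ = c₁ κ₄³ + c₂, and assume Ω₁ < 1. Consider the feasible set S = {(H, s) ∈ (0,∞) × [κ₄, ∞) : H ≥ κ₃ (c₁ s³ + c₂) and κ₁ κ₂ s² + (c₁ s³ + c₂)/H ≤ D}. Then the infimum of H over S equals Ω₂ · max{κ₃, 1/(D(1 - Ω₁))}, and this infimum is attained at s = κ₄. -/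
open Real

/-- Computing-capacity part of Theorem 2 of the paper: with unlimited bandwidth (uplink
time `κ₁ κ₂ s²`), the minimum computing capacity `H` subject to the load cap
`H ≥ κ₃(c₁ s³ + c₂)`, the delay budget `κ₁ κ₂ s² + (c₁ s³ + c₂)/H ≤ D`, and the accuracy
constraint `s ≥ κ₄`, equals `Ω₂ · max{κ₃, 1/(D(1 - Ω₁))}`, attained at `s = κ₄`. -/
theorem min_computing_capacity (D κ₁ κ₂ κ₃ κ₄ c₁ c₂ : ℝ)
    (hD : 0 < D) (hκ₁ : 0 < κ₁) (hκ₂ : 0 < κ₂) (hκ₃ : 0 < κ₃) (hκ₄ : 0 < κ₄)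
    (hc₁ : 0 < c₁) (hc₂ : 0 < c₂)
    (hΩ₁ : κ₂ * κ₁ * κ₄ ^ 2 / D < 1) :
    sInf (Prod.fst '' {p : ℝ × ℝ | 0 < p.1 ∧ κ₄ ≤ p.2 ∧
        κ₃ * (c₁ * p.2 ^ 3 + c₂) ≤ p.1 ∧
        κ₁ * κ₂ * p.2 ^ 2 + (c₁ * p.2 ^ 3 + c₂) / p.1 ≤ D}) =
      (c₁ * κ₄ ^ 3 + c₂) * max κ₃ (1 / (D * (1 - κ₂ * κ₁ * κ₄ ^ 2 / D))) ∧
    ((c₁ * κ₄ ^ 3 + c₂) * max κ₃ (1 / (D * (1 - κ₂ * κ₁ * κ₄ ^ 2 / D))), κ₄) ∈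
      {p : ℝ × ℝ | 0 < p.1 ∧ κ₄ ≤ p.2 ∧
        κ₃ * (c₁ * p.2 ^ 3 + c₂) ≤ p.1 ∧
        κ₁ * κ₂ * p.2 ^ 2 + (c₁ * p.2 ^ 3 + c₂) / p.1 ≤ D} := by
  have hdd : 0 < D - κ₂ * κ₁ * κ₄ ^ 2 := by
    have := (div_lt_one hD).mp hΩ₁; linarith
  have hDeq : D * (1 - κ₂ * κ₁ * κ₄ ^ 2 / D) = D - κ₂ * κ₁ * κ₄ ^ 2 := by
    field_simp
  have hΩ₂ : 0 < c₁ * κ₄ ^ 3 + c₂ := by positivity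
  set M := max κ₃ (1 / (D * (1 - κ₂ * κ₁ * κ₄ ^ 2 / D))) with hM
  set Hstar := (c₁ * κ₄ ^ 3 + c₂) * M with hHstar
  have hMpos : 0 < M := lt_of_lt_of_le hκ₃ (le_max_left _ _)
  have hHpos : 0 < Hstar := by positivity
  have hinvM : 1 / M ≤ D - κ₂ * κ₁ * κ₄ ^ 2 := by
    have h1 : 1 / (D - κ₂ * κ₁ * κ₄ ^ 2) ≤ M := by
      rw [hM, ← hDeq]; exact le_max_right _ _
    rw [div_le_iff₀ hMpos]
    rw [div_le_iff₀ hdd] at h1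
    nlinarith
  have hmem : (Hstar, κ₄) ∈ {p : ℝ × ℝ | 0 < p.1 ∧ κ₄ ≤ p.2 ∧
      κ₃ * (c₁ * p.2 ^ 3 + c₂) ≤ p.1 ∧
      κ₁ * κ₂ * p.2 ^ 2 + (c₁ * p.2 ^ 3 + c₂) / p.1 ≤ D} := by
    refine ⟨hHpos, le_refl _, ?_, ?_⟩
    · have : κ₃ ≤ M := le_max_left _ _
      calc κ₃ * (c₁ * κ₄ ^ 3 + c₂) ≤ M * (c₁ * κ₄ ^ 3 + c₂) := by nlinarith
        _ = Hstar := by rw [hHstar]; ring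
    · have : (c₁ * κ₄ ^ 3 + c₂) / Hstar = 1 / M := by
        rw [hHstar]; field_simp
      rw [this]; linarith
  constructor
  · apply le_antisymm
    · exact csInf_le ⟨0, fun x ⟨p, hp, he⟩ => he ▸ hp.1.le⟩ ⟨_, hmem, rfl⟩
    · refine le_csInf ⟨Hstar, ⟨(Hstar, κ₄), hmem, rfl⟩⟩ ?_
      rintro x ⟨⟨H, s⟩, ⟨hH, hs, hload, hdelay⟩, rfl⟩
      simp only at hH hs hload hdelay ⊢
      have hs3 : c₁ * κ₄ ^ 3 + c₂ ≤ c₁ * s ^ 3 + c₂ := by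
        nlinarith [mul_le_mul_of_nonneg_left (pow_le_pow_left₀ hκ₄.le hs 3) hc₁.le]
      have hspos : 0 < c₁ * s ^ 3 + c₂ := by nlinarith
      have hH1 : (c₁ * s ^ 3 + c₂) / H ≤ D - κ₂ * κ₁ * κ₄ ^ 2 := by
        nlinarith [mul_le_mul_of_nonneg_left (pow_le_pow_left₀ hκ₄.le hs 2) (by positivity : (0:ℝ) ≤ κ₁ * κ₂)]
      have hH2 : (c₁ * s ^ 3 + c₂) / (D - κ₂ * κ₁ * κ₄ ^ 2) ≤ H := by
        rw [div_le_iff₀ hdd]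
        rw [div_le_iff₀ hH] at hH1
        nlinarith
      rcases max_cases κ₃ (1 / (D * (1 - κ₂ * κ₁ * κ₄ ^ 2 / D))) with ⟨hc, _⟩ | ⟨hc, _⟩
      · rw [hHstar, hM, hc]
        calc (c₁ * κ₄ ^ 3 + c₂) * κ₃ ≤ (c₁ * s ^ 3 + c₂) * κ₃ :=
              mul_le_mul_of_nonneg_right hs3 hκ₃.le
          _ = κ₃ * (c₁ * s ^ 3 + c₂) := by ring
          _ ≤ H := hload
      · rw [hHstar, hM, hc, hDeq, mul_one_div]
        exact le_trans (by gcongr) hH2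
  · exact hmem
end
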